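/- Let H be a finite group that is not solvable. Then the restricted wreath product G = H ≀ ℤ is not virtually solvable (every subgroup of finite index in G fails to be solvable), and yet G satisfies a non-trivial law: for all x, y ∈ G, the commutator ⁅x, y⁆ raised to the power |H| equals the identity. -/

import Mathlib

/-- The restricted direct product `Π₀ i : ℤ, H`: the subgroup of `ℤ → H`
consisting of the finitely supported functions (pointwise multiplication). -/
def RestrictedDirectProductZ (H : Type*) [Group H] : Subgroup (ℤ → H) where
  carrier := {f | (Function.mulSupport f).Finite}
  one_mem' := by simp [Function.mulSupport_one]
  mul_mem' := by
    intro f g hf hg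
    exact ((hf.union hg).subset (Function.mulSupport_mul f g))
  inv_mem' := by
    intro f hf
    simpa [Function.mulSupport_inv] using hf

/-- The shift automorphism of the restricted product: `(n • f) i = f (i - n)`. -/
def shiftAut (H : Type*) [Group H] (n : ℤ) : MulAut (RestrictedDirectProductZ H) where
  toFun f := ⟨fun i => (f : ℤ → H) (i - n), by
    refine (f.2.image (· + n)).subset ?_
    intro i hi
    exact ⟨i - n, hi, by ring⟩⟩
  invFun f := ⟨fun i => (f : ℤ → H) (i + n), by
    refine (f.2.image (· - n)).subset ?_
    intro i hi
    exact ⟨i + n, hi, by ring⟩⟩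
  left_inv f := by ext i; simp
  right_inv f := by ext i; simp
  map_mul' f g := by ext i; rfl

/-- The action of `ℤ` (as `Multiplicative ℤ`) on the restricted product by shift
automorphisms. -/
def shiftHom (H : Type*) [Group H] :
    Multiplicative ℤ →* MulAut (RestrictedDirectProductZ H) where
  toFun n := shiftAut H n.toAdd
  map_one' := by
    ext f i
    show (f : ℤ → H) (i - 0) = (f : ℤ → H) i
    rw [sub_zero]
  map_mul' m n := by
    ext f i
    show (f : ℤ → H) (i - (m.toAdd + n.toAdd)) = (f : ℤ → H) (i - m.toAdd - n.toAdd)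
    rw [sub_sub]

/-- The restricted wreath product `H ≀ ℤ`, as the semidirect product of the
restricted direct product `Π₀ i : ℤ, H` with `ℤ` acting by shifts. -/
abbrev WreathProductZ (H : Type*) [Group H] :=
  RestrictedDirectProductZ H ⋊[shiftHom H] Multiplicative ℤ

open scoped commutatorElement

/-!
Commutators of `H ≀ ℤ` lie in the base `Π₀ i : ℤ, H`, since `ℤ` is abelian, and the base has
exponent dividing `|H|`; this is the law.

A finite-index subgroup contains a finite-index normal subgroup `M`, and `M` contains `t ^ k`
for the generator `t` of `ℤ` and some `k ≠ 0`. Commutating `a, b ∈ H` (placed at coordinate `0`)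
with `t ^ k` and `t ^ (2k)` puts `a · (a⁻¹ at k)` and `b · (b⁻¹ at 2k)` into `M`, and the
commutator of these two is `⁅a, b⁆` at coordinate `0`. So `M` contains a copy of `[H, H]`; if `M`
were solvable, so would be `[H, H]`, and then `H`.
-/

open SemidirectProduct Multiplicative

theorem Group.isSolvable_of_commutator_le {G : Type*} [Group G] {K : Subgroup G}
    [Group.IsSolvable K] (h : commutator G ≤ K) : Group.IsSolvable G :=
  Group.isSolvable_of_ker_le_range K.subtype Abelianization.of
    (by rwa [Abelianization.ker_of, K.range_subtype])

theorem Subgroup.Normal.commutatorElement_mem {G : Type*} [Group G] {M : Subgroup G}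
    (hM : M.Normal) (g : G) {m : G} (hm : m ∈ M) : ⁅g, m⁆ ∈ M :=
  M.mul_mem (hM.conj_mem m hm g) (M.inv_mem hm)

theorem Pi.commutatorElement_mulSingle_mul_mulSingle {ι G : Type*} [DecidableEq ι] [Group G]
    {i j k : ι} (hij : i ≠ j) (hik : i ≠ k) (hjk : j ≠ k) (a a' b b' : G) :
    ⁅(mulSingle i a * mulSingle j a' : ι → G), mulSingle i b * mulSingle k b'⁆ =
      (mulSingle i ⁅a, b⁆ : ι → G) := by
  ext t
  by_cases hti : t = i
  · subst hti; simp [hij, hik, commutatorElement_def]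
  by_cases htj : t = j
  · subst htj; simp [hti, hjk, commutatorElement_def]
  by_cases htk : t = k
  · subst htk; simp [hti, htj, commutatorElement_def]
  simp [hti, htj, htk, commutatorElement_def]

namespace SemidirectProduct

variable {N G : Type*} [Group N]

theorem commutatorElement_inl_inr [Group G] {φ : G →* MulAut N} (n : N) (g : G) :
    ⁅(inl n : N ⋊[φ] G), (inr g : N ⋊[φ] G)⁆ = inl (n * φ g n⁻¹) := by
  rw [commutatorElement_def, map_mul, inl_aut, ← map_inv, ← map_inv]
  group

theorem commutatorElement_pow_eq_one [CommGroup G] {φ : G →* MulAut N} {e : ℕ}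
    (hN : ∀ n : N, n ^ e = 1) (x y : N ⋊[φ] G) : ⁅x, y⁆ ^ e = 1 := by
  have hker : ⁅x, y⁆ ∈ (rightHom : N ⋊[φ] G →* G).ker := by
    rw [MonoidHom.mem_ker, map_commutatorElement, commutatorElement_eq_one_iff_commute]
    exact Commute.all _ _
  rw [← range_inl_eq_ker_rightHom] at hker
  obtain ⟨n, hn⟩ := hker
  rw [← hn, ← map_pow, hN, map_one]

end SemidirectProduct

namespace RestrictedDirectProductZ

variable {H : Type*} [Group H]

theorem pow_card_eq_one [Finite H] (f : RestrictedDirectProductZ H) : f ^ Nat.card H = 1 :=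
  Subtype.ext <| funext fun i => by simp [pow_card_eq_one']

def single (j : ℤ) : H →* RestrictedDirectProductZ H :=
  (MonoidHom.mulSingle (fun _ => H) j).codRestrict _ fun _ =>
    (Set.finite_singleton j).subset Pi.mulSupport_mulSingle_subset

@[simp]
theorem coe_single (j : ℤ) (a : H) : (single j a : ℤ → H) = Pi.mulSingle j a := rfl

theorem single_injective (j : ℤ) : Function.Injective (single (H := H) j) := fun _ _ h =>
  Pi.mulSingle_injective j (congrArg Subtype.val h)

theorem shiftAut_single (k j : ℤ) (a : H) : shiftAut H k (single j a) = single (j + k) a := by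
  ext i
  show (Pi.mulSingle j a : ℤ → H) (i - k) = (Pi.mulSingle (j + k) a : ℤ → H) i
  simp only [Pi.mulSingle_apply, sub_eq_iff_eq_add]

theorem commutatorElement_single_mul_single {i j k : ℤ} (hij : i ≠ j) (hik : i ≠ k)
    (hjk : j ≠ k) (a a' b b' : H) :
    ⁅single i a * single j a', single i b * single k b'⁆ = single i ⁅a, b⁆ :=
  (RestrictedDirectProductZ H).subtype_injective <| by
    simpa only [map_commutatorElement (RestrictedDirectProductZ H).subtype,
      map_mul (RestrictedDirectProductZ H).subtype, Subgroup.coe_subtype, coe_single] using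
      Pi.commutatorElement_mulSingle_mul_mulSingle hij hik hjk a a' b b'

end RestrictedDirectProductZ

namespace WreathProductZ

open RestrictedDirectProductZ

variable {H : Type*} [Group H]

theorem commutatorElement_inl_single_inr (l : ℤ) (a : H) :
    ⁅(inl (single 0 a) : WreathProductZ H), (inr (ofAdd l) : WreathProductZ H)⁆ =
      inl (single 0 a * single l a⁻¹) := by
  rw [commutatorElement_inl_inr, ← map_inv]
  simp [shiftHom, shiftAut_single]

theorem inl_single_commutatorElement_mem {M : Subgroup (WreathProductZ H)} (hM : M.Normal)
    {k : ℤ} (hk0 : k ≠ 0) (hk : inr (ofAdd k) ∈ M) (a b : H) :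
    inl (single 0 ⁅a, b⁆) ∈ M := by
  have h2k : inr (ofAdd (2 * k)) ∈ M := by simpa [two_mul] using M.mul_mem hk hk
  have hu := hM.commutatorElement_mem (inl (single 0 a)) hk
  have hv := hM.commutatorElement_mem (inl (single 0 b)) h2k
  rw [commutatorElement_inl_single_inr] at hu hv
  have := hM.commutatorElement_mem (inl (single 0 a * single k a⁻¹)) hv
  rwa [← map_commutatorElement, commutatorElement_single_mul_single] at this <;> omega

theorem isSolvable_of_isSolvable_normal_finiteIndex {M : Subgroup (WreathProductZ H)}
    (hM : M.Normal) [M.FiniteIndex] [Group.IsSolvable M] : Group.IsSolvable H := by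
  set ι : H →* WreathProductZ H := inl.comp (single 0)
  have hι : Function.Injective ι := inl_injective.comp (single_injective 0)
  have : Group.IsSolvable (M.comap ι) :=
    Group.isSolvable_of_isSolvable_injective (f := ι.subgroupComap M) fun a b h =>
      Subtype.ext (hι (congrArg Subtype.val h))
  have hk : inr (ofAdd (M.index : ℤ)) ∈ M := by
    simpa [← map_pow, ← ofAdd_nsmul] using M.pow_index_mem (inr (ofAdd (1 : ℤ)))
  refine Group.isSolvable_of_commutator_le (K := M.comap ι) ?_
  rw [commutator_def, Subgroup.commutator_le]
  exact fun a _ b _ => inl_single_commutatorElement_mem hM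
    (Int.natCast_ne_zero.mpr Subgroup.FiniteIndex.index_ne_zero) hk a b

end WreathProductZ

/-- For a finite non-solvable group `H`, the restricted wreath product `H ≀ ℤ` is
not virtually solvable (no finite-index subgroup is solvable), yet it satisfies the
non-trivial law `⁅x, y⁆ ^ |H| = 1`. -/
theorem wreath_product_not_virtually_solvable_but_law (H : Type*) [Group H] [Finite H]
    (hH : ¬ IsSolvable H) :
    (∀ G : Subgroup (WreathProductZ H), G.index ≠ 0 → ¬ IsSolvable G) ∧
      (∀ x y : WreathProductZ H, ⁅x, y⁆ ^ (Nat.card H) = 1) := by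
  refine ⟨fun G hG hG_solv => hH ?_,
    commutatorElement_pow_eq_one RestrictedDirectProductZ.pow_card_eq_one⟩
  have : G.FiniteIndex := ⟨hG⟩
  have : Group.IsSolvable G := hG_solv
  have : Group.IsSolvable G.normalCore :=
    Group.isSolvable_of_isSolvable_injective (Subgroup.inclusion_injective G.normalCore_le)
  exact WreathProductZ.isSolvable_of_isSolvable_normal_finiteIndex G.normalCore_normal
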